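/- The linear operators φ and ω agree on ab-monomials beginning with the letter a: φ(a·v) = ω(a·v) for every ab-monomial v. -/

import Mathlib

open scoped TensorProduct
open scoped Classical

noncomputable section

abbrev Alg : Type := MonoidAlgebra ℤ (FreeMonoid Bool)

def va : Alg := MonoidAlgebra.of ℤ (FreeMonoid Bool) (FreeMonoid.of false)
def vb : Alg := MonoidAlgebra.of ℤ (FreeMonoid Bool) (FreeMonoid.of true)

def monoOf (l : List Bool) : Alg := MonoidAlgebra.of ℤ (FreeMonoid Bool) (FreeMonoid.ofList l)

def toF (x : Alg) : FreeMonoid Bool →₀ ℤ := x.coeff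

/-- The weight of a chain encoded as a strictly increasing map `f : Fin (k+1) → P`. -/
def wtChain {P : Type} (ρ : P → ℕ) {k : ℕ} (f : Fin (k+1) → P) : Alg :=
  (List.ofFn (fun i : Fin k =>
    (va - vb) ^ (ρ (f i.succ) - ρ (f i.castSucc) - 1) *
      (if (i : ℕ) + 1 < k then vb else 1))).prod

def zetaChain {P : Type} (zb : P → P → ℤ) {k : ℕ} (f : Fin (k+1) → P) : ℤ :=
  ∏ i : Fin k, zb (f i.castSucc) (f i.succ)

/-- The ab-index of the interval `[lo, hi]` of a quasi-graded poset `(P, ρ, zb)`. -/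
def PsiI {P : Type} [Fintype P] [PartialOrder P] (ρ : P → ℕ) (zb : P → P → ℤ)
    (lo hi : P) : Alg :=
  ∑ k ∈ Finset.range (Fintype.card P + 1),
    ∑ f : Fin (k+1) → P,
      if StrictMono f ∧ f 0 = lo ∧ f (Fin.last k) = hi
      then zetaChain zb f • wtChain ρ f else 0

/-- The algebra map `κ` with `κ(a) = a - b`, `κ(b) = 0`. -/
def kappa : Alg →ₐ[ℤ] Alg :=
  MonoidAlgebra.lift ℤ Alg (FreeMonoid Bool)
    (FreeMonoid.lift (fun s => if s then 0 else va - vb))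

/-- The algebra map `λ̄` with `λ̄(a) = 0`, `λ̄(b) = a - b`. -/
def lambdabar : Alg →ₐ[ℤ] Alg :=
  MonoidAlgebra.lift ℤ Alg (FreeMonoid Bool)
    (FreeMonoid.lift (fun s => if s then va - vb else 0))

/-- `η` on monomials: `b^m a^k ↦ 2 (a-b)^(m+k)`, other monomials to `0`. -/
def etaMon (w : FreeMonoid Bool) : Alg :=
  if ∃ m k : ℕ, FreeMonoid.toList w = List.replicate m true ++ List.replicate k false
  then (2 : ℤ) • (va - vb) ^ (FreeMonoid.toList w).length else 0

def etaOp (x : Alg) : Alg := (toF x).sum fun w c => c • etaMon w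

/-- The letter-deletion coproduct on `Z⟨a,b⟩`. -/
def Delta (x : Alg) : Alg ⊗[ℤ] Alg :=
  (toF x).sum fun w c => c •
    ∑ i ∈ Finset.range (FreeMonoid.toList w).length,
      monoOf ((FreeMonoid.toList w).take i) ⊗ₜ[ℤ] monoOf ((FreeMonoid.toList w).drop (i+1))

/-- The Sweedler-style convolution `x ↦ Σ F(x₍₁₎) · b · G(x₍₂₎)`. -/
def sweedler (F G : Alg → Alg) (x : Alg) : Alg :=
  (toF x).sum fun w c => c •
    ∑ i ∈ Finset.range (FreeMonoid.toList w).length,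
      F (monoOf ((FreeMonoid.toList w).take i)) * vb *
        G (monoOf ((FreeMonoid.toList w).drop (i+1)))

/-- `phiAux n = φ_{n+1}`, defined by `φ₁ = κ` and `φ_{k+1}(w) = Σ φ_k(w₍₁₎) · b · η(w₍₂₎)`. -/
def phiAux : ℕ → Alg → Alg
  | 0 => fun x => kappa x
  | (n+1) => fun x => sweedler (phiAux n) etaOp x

def maxLen (x : Alg) : ℕ := (toF x).support.sup fun w => (FreeMonoid.toList w).length

/-- The operator `φ = Σ_{k ≥ 1} φ_k` (the sum is finite on any given polynomial). -/
def phi (x : Alg) : Alg := ∑ k ∈ Finset.range (maxLen x + 1), phiAux k x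

/-- `ω` on a monomial: replace each occurrence of `ab` by `2d` and remaining letters by `c`. -/
def omegaList : List Bool → Alg
  | [] => 1
  | false :: true :: rest => ((2:ℤ) • (va * vb + vb * va)) * omegaList rest
  | _ :: rest => (va + vb) * omegaList rest

def omegaOp (x : Alg) : Alg := (toF x).sum fun w c => c • omegaList (FreeMonoid.toList w)

/-- The operator `G(w) = φ(w)·b + Σ φ(w₍₁₎)·b·λ̄(w₍₂₎)·(a-b)`. -/
def Gop (w : Alg) : Alg := phi w * vb + sweedler phi (fun y => lambdabar y) w * (va - vb)

/-- The reversal map `u ↦ u*` reading each monomial backwards. -/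
def revOp (x : Alg) : Alg :=
  (toF x).sum fun w c =>
    MonoidAlgebra.single (FreeMonoid.ofList (FreeMonoid.toList w).reverse) c

/-- `H'` deletes the last letter of each monomial, `H'(1) = 0`. -/
def Hp (x : Alg) : Alg :=
  (toF x).sum fun w c => if w = 1 then 0 else c • monoOf ((FreeMonoid.toList w).dropLast)

end

/-!
Both `φ` and `ω` obey the same recursion on the right end of a word that is empty or begins
with `a`: appending `a`, or appending `b` after a `b`, multiplies by `c`, and appending `ab`
multiplies by `d`. For `φ` this comes from `φ(w) = κ(w) + Σ φ(w₍₁₎) · b · η(w₍₂₎)`: appending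
such a letter multiplies `κ(w)` and every surviving `η(w₍₂₎)` by `a - b`, while deleting the new
last letter contributes `φ(w) · 2b`, and `(a - b) + 2b = c`. Appending `ab` kills every term
except the deletions of the final `a` and `b`, which give `φ(w) · 2(b(a - b) + cb) = φ(w) · d`.
-/

lemma toF_monoOf (l : List Bool) : toF (monoOf l) = Finsupp.single (FreeMonoid.ofList l) 1 := rfl

lemma monoOf_append (s t : List Bool) : monoOf (s ++ t) = monoOf s * monoOf t := by
  rw [monoOf, FreeMonoid.ofList_append, map_mul]
  rfl

lemma omegaOp_monoOf (l : List Bool) : omegaOp (monoOf l) = omegaList l := by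
  simp [omegaOp, toF_monoOf]

lemma etaOp_monoOf (l : List Bool) : etaOp (monoOf l) = etaMon (FreeMonoid.ofList l) := by
  simp [etaOp, toF_monoOf]

lemma sweedler_monoOf (F G : Alg → Alg) (l : List Bool) : sweedler F G (monoOf l) =
    ∑ i ∈ Finset.range l.length, F (monoOf (l.take i)) * vb * G (monoOf (l.drop (i+1))) := by
  simp [sweedler, toF_monoOf]

lemma maxLen_monoOf (l : List Bool) : maxLen (monoOf l) = l.length := by
  simp [maxLen, toF_monoOf]

lemma omegaList_append (w u : List Bool) (h : w.getLast? = some false → u.head? ≠ some true) :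
    omegaList (w ++ u) = omegaList w * omegaList u := by
  induction w using omegaList.induct with
  | case1 => simp [omegaList]
  | case2 rest ih =>
    rw [List.cons_append, List.cons_append, omegaList, omegaList, ih, mul_assoc]
    intro hl
    exact h (by cases rest <;> simp_all)
  | case3 x rest hx ih =>
    have hx' : ∀ r, x = false → rest ++ u = true :: r → False := by
      rintro r rfl hr
      cases rest with
      | nil => simp_all
      | cons y rest => exact hx rest rfl (by simp_all)
    rw [List.cons_append, omegaList.eq_3 x _ hx', omegaList.eq_3 x rest hx, ih, mul_assoc]
    intro hl
    exact h (by cases rest <;> simp_all)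

lemma phiAux_monoOf_of_length_lt :
    ∀ (n : ℕ) (l : List Bool), l.length < n → phiAux n (monoOf l) = 0
  | 0, _, h => absurd h (Nat.not_lt_zero _)
  | n + 1, l, h => by
    simp only [phiAux, sweedler_monoOf]
    refine Finset.sum_eq_zero fun i hi => ?_
    rw [phiAux_monoOf_of_length_lt n _ (by simp at hi ⊢; omega), zero_mul, zero_mul]

lemma phi_monoOf (l : List Bool) :
    phi (monoOf l) = ∑ k ∈ Finset.range (l.length + 1), phiAux k (monoOf l) := by
  rw [phi, maxLen_monoOf]

lemma phi_monoOf_nil : phi (monoOf []) = 1 := by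
  simp only [phi_monoOf, List.length_nil, zero_add, Finset.sum_range_one, phiAux]
  exact map_one kappa

lemma phi_monoOf_eq (l : List Bool) : phi (monoOf l) = kappa (monoOf l) +
    ∑ i ∈ Finset.range l.length,
      phi (monoOf (l.take i)) * vb * etaMon (FreeMonoid.ofList (l.drop (i+1))) := by
  have hsucc (k : ℕ) : phiAux (k+1) (monoOf l) = ∑ i ∈ Finset.range l.length,
      phiAux k (monoOf (l.take i)) * vb * etaMon (FreeMonoid.ofList (l.drop (i+1))) := by
    simp only [phiAux, sweedler_monoOf, etaOp_monoOf]
  have hprefix (i : ℕ) (hi : i < l.length) : phi (monoOf (l.take i)) =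
      ∑ k ∈ Finset.range l.length, phiAux k (monoOf (l.take i)) := by
    rw [phi_monoOf]
    refine Finset.sum_subset (Finset.range_subset_range.mpr (by simp; omega)) fun k _ hk => ?_
    exact phiAux_monoOf_of_length_lt k _ (by simp at hk ⊢; omega)
  rw [phi_monoOf, Finset.sum_range_succ', add_comm, phiAux]
  simp only [hsucc]
  rw [Finset.sum_comm]
  refine congrArg _ (Finset.sum_congr rfl fun i hi => ?_)
  rw [hprefix i (Finset.mem_range.mp hi), Finset.sum_mul, Finset.sum_mul]

lemma phi_monoOf_concat (w : List Bool) (x : Bool) : phi (monoOf (w ++ [x])) =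
    kappa (monoOf (w ++ [x])) + ∑ i ∈ Finset.range w.length,
      phi (monoOf (w.take i)) * vb * etaMon (FreeMonoid.ofList (w.drop (i+1) ++ [x])) +
    phi (monoOf w) * vb * 2 := by
  rw [phi_monoOf_eq, List.length_append, List.length_singleton, Finset.sum_range_succ, add_assoc]
  congr 2
  · refine Finset.sum_congr rfl fun i hi => ?_
    have hi : i < w.length := Finset.mem_range.mp hi
    rw [List.take_append_of_le_length hi.le, List.drop_append_of_le_length hi]
  · simp [etaMon]

lemma kappa_monoOf_false : kappa (monoOf [false]) = va - vb := by
  simp [kappa, monoOf]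

lemma kappa_monoOf_true : kappa (monoOf [true]) = 0 := by
  simp [kappa, monoOf]

lemma exists_replicate_append_replicate_iff_pairwise (l : List Bool) :
    (∃ m k, l = List.replicate m true ++ List.replicate k false) ↔ l.Pairwise (· ≥ ·) := by
  constructor
  · rintro ⟨m, k, rfl⟩
    simp [List.pairwise_append, List.pairwise_replicate]
  · induction l with
    | nil => exact fun _ => ⟨0, 0, rfl⟩
    | cons x l ih =>
      rw [List.pairwise_cons]
      rintro ⟨hx, hl⟩
      obtain ⟨m, k, rfl⟩ := ih hl
      cases x with
      | true => exact ⟨m + 1, k, rfl⟩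
      | false =>
        cases m with
        | zero => exact ⟨0, k + 1, rfl⟩
        | succ m => exact absurd (hx true (by simp)) (by decide)

lemma etaMon_ofList (s : List Bool) : etaMon (FreeMonoid.ofList s) =
    if s.Pairwise (· ≥ ·) then (2 : ℤ) • (va - vb) ^ s.length else 0 := by
  simp [etaMon, exists_replicate_append_replicate_iff_pairwise]

lemma etaMon_concat_false (s : List Bool) :
    etaMon (FreeMonoid.ofList (s ++ [false])) = etaMon (FreeMonoid.ofList s) * (va - vb) := by
  rw [etaMon_ofList, etaMon_ofList]
  simp [List.pairwise_append, pow_succ, mul_assoc]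

lemma etaMon_concat_true {s : List Bool} (hs : s.getLast? ≠ some false) :
    etaMon (FreeMonoid.ofList (s ++ [true])) = etaMon (FreeMonoid.ofList s) * (va - vb) := by
  obtain rfl | ⟨s, t, rfl⟩ := s.eq_nil_or_concat'
  · rw [List.nil_append, etaMon_ofList, etaMon_ofList]
    simp
  · obtain rfl : t = true := by simpa using hs
    rw [etaMon_ofList, etaMon_ofList]
    simp [List.pairwise_append, pow_succ, mul_assoc]

lemma etaMon_append_false_true (s : List Bool) :
    etaMon (FreeMonoid.ofList (s ++ [false, true])) = 0 := by
  rw [etaMon_ofList]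
  simp [List.pairwise_append]

lemma phi_monoOf_concat_eq_mul (w : List Bool) (x : Bool)
    (hκ : kappa (monoOf (w ++ [x])) = kappa (monoOf w) * (va - vb))
    (hη : ∀ i < w.length, etaMon (FreeMonoid.ofList (w.drop (i+1) ++ [x])) =
      etaMon (FreeMonoid.ofList (w.drop (i+1))) * (va - vb)) :
    phi (monoOf (w ++ [x])) = phi (monoOf w) * (va + vb) := by
  have hrec := phi_monoOf_eq w
  rw [phi_monoOf_concat, hκ, Finset.sum_congr rfl fun i hi => by
    rw [hη i (Finset.mem_range.mp hi), ← mul_assoc]]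
  rw [← Finset.sum_mul, ← add_mul, ← hrec]
  noncomm_ring

lemma phi_monoOf_concat_false (w : List Bool) :
    phi (monoOf (w ++ [false])) = phi (monoOf w) * (va + vb) :=
  phi_monoOf_concat_eq_mul w false (by rw [monoOf_append, map_mul, kappa_monoOf_false])
    fun _ _ => etaMon_concat_false _

lemma phi_monoOf_append_true_true (v : List Bool) :
    phi (monoOf (v ++ [true, true])) = phi (monoOf (v ++ [true])) * (va + vb) := by
  rw [show v ++ [true, true] = v ++ [true] ++ [true] by simp]
  refine phi_monoOf_concat_eq_mul _ true ?_ fun i _ => etaMon_concat_true ?_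
  · simp only [monoOf_append, map_mul, kappa_monoOf_true, mul_zero, zero_mul]
  · simp [List.getLast?_drop]

lemma phi_monoOf_append_false_true (v : List Bool) :
    phi (monoOf (v ++ [false, true])) = phi (monoOf v) * ((2 : ℤ) • (va * vb + vb * va)) := by
  rw [show v ++ [false, true] = v ++ [false] ++ [true] by simp, phi_monoOf_concat,
    phi_monoOf_concat_false, List.length_append, List.length_singleton, Finset.sum_range_succ]
  have hκ : kappa (monoOf (v ++ [false] ++ [true])) = 0 := by
    simp only [monoOf_append, map_mul, kappa_monoOf_true, mul_zero]
  have hab (i : ℕ) (hi : i ∈ Finset.range v.length) : phi (monoOf ((v ++ [false]).take i)) * vb *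
      etaMon (FreeMonoid.ofList ((v ++ [false]).drop (i+1) ++ [true])) = 0 := by
    rw [List.drop_append_of_le_length (Finset.mem_range.mp hi), List.append_assoc,
      List.singleton_append, etaMon_append_false_true, mul_zero]
  have hb : etaMon (FreeMonoid.ofList ((v ++ [false]).drop (v.length + 1) ++ [true])) =
      (2 : ℤ) • (va - vb) := by
    rw [show (v ++ [false]).drop (v.length + 1) ++ [true] = [true] by simp, etaMon_ofList]
    simp
  rw [hκ, Finset.sum_eq_zero hab, hb, List.take_left' rfl]
  simp only [zsmul_eq_mul, Int.cast_ofNat]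
  noncomm_ring

theorem phi_monoOf_eq_omegaList (w : List Bool) (hw : w.head? ≠ some true) :
    phi (monoOf w) = omegaList w := by
  obtain rfl | ⟨v, x, rfl⟩ := w.eq_nil_or_concat'
  · rw [phi_monoOf_nil, omegaList]
  have hv : v.head? ≠ some true := by cases v <;> simp_all
  cases x with
  | false =>
    rw [phi_monoOf_concat_false, phi_monoOf_eq_omegaList v hv, omegaList_append _ _ (by simp)]
    simp [omegaList]
  | true =>
    obtain rfl | ⟨u, y, rfl⟩ := v.eq_nil_or_concat'
    · simp at hw
    rw [List.append_assoc, List.singleton_append]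
    cases y with
    | false =>
      have hu : u.head? ≠ some true := by cases u <;> simp_all
      rw [phi_monoOf_append_false_true, phi_monoOf_eq_omegaList u hu,
        omegaList_append _ _ (by simp)]
      simp [omegaList]
    | true =>
      rw [phi_monoOf_append_true_true, phi_monoOf_eq_omegaList _ hv,
        show u ++ [true, true] = u ++ [true] ++ [true] by simp,
        omegaList_append (u ++ [true]) [true] (by simp)]
      simp [omegaList]
termination_by w.length

/-- `φ` and `ω` agree on ab-monomials beginning with the letter `a`. -/
theorem phi_eq_omega_on_a (l : List Bool) :
    phi (monoOf (false :: l)) = omegaOp (monoOf (false :: l)) := by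
  rw [omegaOp_monoOf]
  exact phi_monoOf_eq_omegaList _ (by simp)
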